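/- arXiv:2501.00847 — 3 statements merged into one kernel-verified Lean document; each statement's English description precedes it below -/
import Mathlib

section
/- Let L be a block-diagonal (n-2)×(n-2) real matrix consisting of q two-by-two blocks of the form [[s_ν, a_ν],[-a_ν, s_ν]] with s_ν = r/(r²+(a⁰_ν)²), a_ν = a⁰_ν/(r²+(a⁰_ν)²), followed by a diagonal block diag(1/r,…,1/r,0,…,0) with m-2q entries 1/r and n-2-m zeros, where r ≠ 0. Then L satisfies the optical constraint L Lᵀ = (tr(L Lᵀ)/((n-2)θ)) S, where S = (L+Lᵀ)/2 and θ = tr(S)/(n-2), provided θ ≠ 0. -/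
open Matrix

/-!
Entrywise, `L Lᵀ = (1/r) S`. On a 2×2 block `[[s, a], [-a, s]]` the rows are orthogonal of
squared length `s² + a² = 1/(r² + (a⁰)²) = s/r`, while the symmetric part is `s I`; on the
diagonal tail `(1/r)² = (1/r)·(1/r)` and `0² = 0`. Any `L` with `L Lᵀ = c S` and `tr S ≠ 0`
satisfies the optical constraint, with `c = tr(L Lᵀ)/tr S` and `tr S = (n-2)θ`.
-/

/-- The canonical block-diagonal optical matrix of size `N = n-2`:
`q` 2×2 blocks `[[s_ν, a_ν],[-a_ν, s_ν]]` with `s_ν = r/(r²+(a⁰_ν)²)`,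
`a_ν = a⁰_ν/(r²+(a⁰_ν)²)`, followed by `m-2q` diagonal entries `1/r` and
`N-m` zeros. -/
noncomputable def canonicalL (N q m : ℕ) (r : ℝ) (a0 : ℕ → ℝ) :
    Matrix (Fin N) (Fin N) ℝ :=
  Matrix.of fun i j =>
    if i = j then
      (if i.val < 2 * q then r / (r ^ 2 + (a0 (i.val / 2)) ^ 2)
       else if i.val < m then 1 / r else 0)
    else if i.val % 2 = 0 ∧ j.val = i.val + 1 ∧ j.val < 2 * q then
      a0 (i.val / 2) / (r ^ 2 + (a0 (i.val / 2)) ^ 2)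
    else if j.val % 2 = 0 ∧ i.val = j.val + 1 ∧ i.val < 2 * q then
      -(a0 (j.val / 2) / (r ^ 2 + (a0 (j.val / 2)) ^ 2))
    else 0

theorem Matrix.eq_trace_div_trace_smul {ι K : Type*} [Fintype ι] [Field K]
    {A S : Matrix ι ι K} {c : K} (h : A = c • S) (hS : S.trace ≠ 0) :
    A = (A.trace / S.trace) • S := by
  rw [h, trace_smul, smul_eq_mul, mul_div_cancel_right₀ c hS]

namespace canonicalL

variable {N q m : ℕ} {r : ℝ} {a0 : ℕ → ℝ}

theorem eq_or_same_block_of_apply_ne_zero {i k : Fin N}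
    (h : canonicalL N q m r a0 i k ≠ 0) :
    k = i ∨ (i.val / 2 = k.val / 2 ∧ i.val < 2 * q ∧ k.val < 2 * q) := by
  rw [Fin.ext_iff]
  contrapose! h
  simp only [canonicalL, of_apply, Fin.ext_iff]
  split_ifs <;> first | rfl | omega

theorem block_entries {ν : ℕ} {i j : Fin N} (hν : ν < q) (hi : i.val = 2 * ν)
    (hj : j.val = 2 * ν + 1) :
    canonicalL N q m r a0 i i = r / (r ^ 2 + a0 ν ^ 2) ∧
    canonicalL N q m r a0 j j = r / (r ^ 2 + a0 ν ^ 2) ∧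
    canonicalL N q m r a0 i j = a0 ν / (r ^ 2 + a0 ν ^ 2) ∧
    canonicalL N q m r a0 j i = -(a0 ν / (r ^ 2 + a0 ν ^ 2)) := by
  have hij : i ≠ j := fun h => by rw [Fin.ext_iff] at h; omega
  have hi2 : i.val / 2 = ν := by omega
  have hj2 : j.val / 2 = ν := by omega
  refine ⟨?_, ?_, ?_, ?_⟩
  · rw [canonicalL, of_apply, if_pos rfl, if_pos (by omega), hi2]
  · rw [canonicalL, of_apply, if_pos rfl, if_pos (by omega), hj2]
  · rw [canonicalL, of_apply, if_neg hij, if_pos (by omega), hi2]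
  · rw [canonicalL, of_apply, if_neg hij.symm, if_neg (by omega), if_pos (by omega), hi2]

theorem sum_mul_of_same_block (hr : r ≠ 0) (hN : 2 * q ≤ N) {ν : ℕ} (hν : ν < q)
    {i j : Fin N} (hi : i.val / 2 = ν) (hj : j.val / 2 = ν) :
    ∑ k, canonicalL N q m r a0 i k * canonicalL N q m r a0 j k =
      1 / r * (1 / 2 * (canonicalL N q m r a0 i j + canonicalL N q m r a0 j i)) := by
  set a : Fin N := ⟨2 * ν, by omega⟩
  set b : Fin N := ⟨2 * ν + 1, by omega⟩
  have hab : a ≠ b := fun h => by simp [a, b, Fin.ext_iff] at h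
  have mem_block : ∀ k : Fin N, k.val / 2 = ν → k = a ∨ k = b := by
    intro k hk
    simp only [a, b, Fin.ext_iff]
    omega
  have hsum : ∑ k, canonicalL N q m r a0 i k * canonicalL N q m r a0 j k =
      canonicalL N q m r a0 i a * canonicalL N q m r a0 j a +
        canonicalL N q m r a0 i b * canonicalL N q m r a0 j b := by
    rw [← Finset.sum_subset (Finset.subset_univ {a, b}), Finset.sum_pair hab]
    intro k _ hk
    suffices canonicalL N q m r a0 i k = 0 by rw [this, zero_mul]
    by_contra h
    have hk2 : k.val / 2 = ν := by
      rcases eq_or_same_block_of_apply_ne_zero h with rfl | ⟨h', -⟩ <;> omega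
    rcases mem_block k hk2 with rfl | rfl <;> simp at hk
  obtain ⟨e_aa, e_bb, e_ab, e_ba⟩ := block_entries (N := N) (m := m) (r := r) (a0 := a0)
    (i := a) (j := b) hν rfl rfl
  have hd : r ^ 2 + a0 ν ^ 2 ≠ 0 := by positivity
  rw [hsum]
  rcases mem_block i hi with hi | hi <;> rcases mem_block j hj with hj | hj <;>
    rw [hi, hj] <;>
    simp only [e_aa, e_bb, e_ab, e_ba] <;> field_simp <;> ring

theorem sum_mul_self_of_le {i : Fin N} (hi : 2 * q ≤ i.val) :
    ∑ k, canonicalL N q m r a0 i k * canonicalL N q m r a0 i k =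
      1 / r * (1 / 2 * (canonicalL N q m r a0 i i + canonicalL N q m r a0 i i)) := by
  rw [Finset.sum_eq_single_of_mem i (Finset.mem_univ i)]
  · rw [canonicalL, of_apply, if_pos rfl, if_neg (by omega)]
    split_ifs <;> ring
  · intro k _ hk
    suffices canonicalL N q m r a0 i k = 0 by rw [this, zero_mul]
    by_contra h
    rcases eq_or_same_block_of_apply_ne_zero h with rfl | ⟨-, h', -⟩
    · exact hk rfl
    · omega

theorem apply_eq_zero_of_not_same_block {i j : Fin N} (hij : i ≠ j)
    (h : ¬(i.val / 2 = j.val / 2 ∧ i.val < 2 * q)) : canonicalL N q m r a0 i j = 0 := by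
  by_contra hij'
  rcases eq_or_same_block_of_apply_ne_zero hij' with rfl | ⟨hdiv, hi, -⟩
  · exact hij rfl
  · exact h ⟨hdiv, hi⟩

theorem mul_eq_zero_of_not_same_block {i j : Fin N} (hij : i ≠ j)
    (h : ¬(i.val / 2 = j.val / 2 ∧ i.val < 2 * q)) (k : Fin N) :
    canonicalL N q m r a0 i k * canonicalL N q m r a0 j k = 0 := by
  by_contra hk
  obtain ⟨hik, hjk⟩ := mul_ne_zero_iff.mp hk
  rw [Ne, Fin.ext_iff] at hij
  rcases eq_or_same_block_of_apply_ne_zero hik with rfl | hik <;>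
    rcases eq_or_same_block_of_apply_ne_zero hjk with rfl | hjk <;> omega

theorem mul_transpose (hr : r ≠ 0) (hN : 2 * q ≤ N) :
    canonicalL N q m r a0 * (canonicalL N q m r a0)ᵀ =
      (1 / r) • ((1 / 2 : ℝ) • (canonicalL N q m r a0 + (canonicalL N q m r a0)ᵀ)) := by
  ext i j
  simp only [mul_apply, transpose_apply, Matrix.smul_apply, Matrix.add_apply, smul_eq_mul]
  by_cases hblock : i.val / 2 = j.val / 2 ∧ i.val < 2 * q
  · exact sum_mul_of_same_block hr hN (by omega) rfl hblock.1.symm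
  by_cases hij : i = j
  · subst hij
    exact sum_mul_self_of_le (by omega)
  have hji : ¬(j.val / 2 = i.val / 2 ∧ j.val < 2 * q) := by omega
  rw [Finset.sum_eq_zero fun k _ => mul_eq_zero_of_not_same_block hij hblock k,
    apply_eq_zero_of_not_same_block hij hblock,
    apply_eq_zero_of_not_same_block (Ne.symm hij) hji]
  ring

end canonicalL

theorem stmt_8_general (n q m : ℕ) (r : ℝ) (a0 : ℕ → ℝ) (hr : r ≠ 0)
    (hq : 2 * q ≤ m) (hm : m ≤ n - 2)
    (L S : Matrix (Fin (n - 2)) (Fin (n - 2)) ℝ) (θ : ℝ)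
    (hL : L = canonicalL (n - 2) q m r a0)
    (hS : S = (1 / 2 : ℝ) • (L + Lᵀ))
    (hθ : θ = S.trace / ((n : ℝ) - 2))
    (hθ0 : θ ≠ 0) :
    L * Lᵀ = ((L * Lᵀ).trace / (((n : ℝ) - 2) * θ)) • S := by
  have hn2 : (n : ℝ) - 2 ≠ 0 := fun h => hθ0 (by rw [hθ, h, div_zero])
  have htrace : ((n : ℝ) - 2) * θ = S.trace := by
    rw [hθ]
    field_simp
  rw [htrace]
  refine eq_trace_div_trace_smul (c := 1 / r) ?_ (htrace ▸ mul_ne_zero hn2 hθ0)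
  rw [hS, hL]
  exact canonicalL.mul_transpose hr (hq.trans hm)

/-- The canonical optical matrix satisfies the optical constraint
`L Lᵀ = (tr(L Lᵀ)/((n-2)θ)) S`, `S = (L+Lᵀ)/2`, `θ = tr S/(n-2)`, when `θ ≠ 0`. -/
theorem stmt_8 (n q m : ℕ) (r : ℝ) (a0 : ℕ → ℝ) (hr : r ≠ 0)
    (hn : 2 ≤ n) (hq : 2 * q ≤ m) (hm : m ≤ n - 2)
    (L S : Matrix (Fin (n - 2)) (Fin (n - 2)) ℝ) (θ : ℝ)
    (hL : L = canonicalL (n - 2) q m r a0)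
    (hS : S = (1 / 2 : ℝ) • (L + Lᵀ))
    (hθ : θ = S.trace / ((n : ℝ) - 2))
    (hθ0 : θ ≠ 0) :
    L * Lᵀ = ((L * Lᵀ).trace / (((n : ℝ) - 2) * θ)) • S :=
  stmt_8_general n q m r a0 hr hq hm L S θ hL hS hθ hθ0
end

section
/- For the canonical optical matrix with q twisting blocks and parameters a⁰_{(2ν)}, the expansion is (n-2)θ = 2Σ_{ν=1}^q r/(r²+(a⁰_{(2ν)})²) + (m-2q)/r, the twist satisfies ω² = 2Σ_{ν=1}^q (a⁰_{(2ν)}/(r²+(a⁰_{(2ν)})²))², and if q = 0 and θ ≠ 0 then the shear σ² = 2Σ_ν(s_ν - θ)² + (m-2q)(1/r - θ)² + (n-2-m)θ² vanishes if and only if m = n-2 (equivalently θ = 1/r). -/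
/-!
The symmetric part of `L` has the trace of `L`, to which each twisting block contributes
its diagonal entry `r / (r² + a²)` twice and each of the remaining `m - 2q` nonzero
diagonal entries contributes `1 / r`. Each of the first `2q` rows of the antisymmetric part
has exactly one nonzero entry, `± a / (r² + a²)`, so `tr(A Aᵀ)` counts every block twice.
For `q = 0` the shear is the sum of the nonnegative terms `m (1/r - θ)²` and
`(n - 2 - m) θ²`, so with `θ ≠ 0` it vanishes only if `m = n - 2`, and the expansion
`(n - 2) θ = m / r` makes `m = n - 2` equivalent to `θ = 1 / r`.
-/

open Matrix

open Finset

lemma Finset.sum_range_two_mul_div_two {M : Type*} [AddCommMonoid M] (q : ℕ) (f : ℕ → M) :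
    ∑ i ∈ range (2 * q), f (i / 2) = 2 • ∑ k ∈ range q, f k := by
  induction q with
  | zero => simp
  | succ k ih =>
    rw [show 2 * (k + 1) = 2 * k + 1 + 1 by ring, sum_range_succ, sum_range_succ, ih,
      sum_range_succ, show (2 * k + 1) / 2 = k by omega, Nat.mul_div_cancel_left k two_pos,
      smul_add, two_nsmul (f k), add_assoc]

lemma Finset.sum_range_ite_lt {M : Type*} [AddCommMonoid M] {k N : ℕ} (h : k ≤ N)
    (f : ℕ → M) : ∑ i ∈ range N, (if i < k then f i else 0) = ∑ i ∈ range k, f i := by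
  rw [sum_ite, sum_const_zero, add_zero]
  congr 1
  ext i
  simp only [mem_filter, mem_range]
  omega

lemma Matrix.ne_zero_of_trace_ne_zero {R : Type*} [AddCommMonoid R] {k : ℕ}
    {M : Matrix (Fin k) (Fin k) R} (h : M.trace ≠ 0) : k ≠ 0 := by
  rintro rfl
  exact h M.trace_fin_zero

lemma Matrix.trace_mul_transpose_self {ι κ R : Type*} [Fintype ι] [Fintype κ] [Semiring R]
    (A : Matrix ι κ R) : (A * Aᵀ).trace = ∑ i, ∑ j, A i j ^ 2 := by
  simp [Matrix.trace, Matrix.mul_apply, sq]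

section CanonicalL

variable {N q m : ℕ} (r : ℝ) (a0 : ℕ → ℝ)

theorem trace_canonicalL (hq : 2 * q ≤ m) (hm : m ≤ N) :
    (canonicalL N q m r a0).trace =
      2 * ∑ ν ∈ range q, r / (r ^ 2 + a0 ν ^ 2) + ((m : ℝ) - 2 * q) / r := by
  set d : ℕ → ℝ := fun i =>
    if i < 2 * q then r / (r ^ 2 + a0 (i / 2) ^ 2) else if i < m then 1 / r else 0
  have hdiag : (canonicalL N q m r a0).trace = ∑ i ∈ range N, d i := by
    rw [Matrix.trace, ← Fin.sum_univ_eq_sum_range]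
    simp [canonicalL, d]
  have h₁ :
      ∑ i ∈ range (2 * q), d i = ∑ i ∈ range (2 * q), r / (r ^ 2 + a0 (i / 2) ^ 2) :=
    sum_congr rfl fun i hi => if_pos (mem_range.1 hi)
  have h₂ : ∑ i ∈ Ico (2 * q) m, d i = ∑ i ∈ Ico (2 * q) m, 1 / r :=
    sum_congr rfl fun i hi => by
      rw [mem_Ico] at hi
      simp [d, hi.2, hi.1.not_gt]
  have h₃ : ∑ i ∈ Ico m N, d i = 0 :=
    sum_eq_zero fun i hi => by
      rw [mem_Ico] at hi
      simp [d, hi.1.not_gt, (hq.trans hi.1).not_gt]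
  rw [hdiag, ← sum_range_add_sum_Ico _ hm, ← sum_range_add_sum_Ico _ hq, h₁, h₂, h₃,
    sum_range_two_mul_div_two q fun ν => r / (r ^ 2 + a0 ν ^ 2), sum_const, Nat.card_Ico,
    nsmul_eq_mul, nsmul_eq_mul, Nat.cast_sub hq]
  push_cast
  ring

def pairPartner (i : ℕ) : ℕ := if i % 2 = 0 then i + 1 else i - 1

lemma canonicalL_skew_apply_sq (i j : Fin N) :
    ((1 / 2 : ℝ) • (canonicalL N q m r a0 - (canonicalL N q m r a0)ᵀ)) i j ^ 2 =
      if j.val = pairPartner i ∧ i.val < 2 * q then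
        (a0 (i / 2) / (r ^ 2 + a0 (i / 2) ^ 2)) ^ 2 else 0 := by
  simp only [canonicalL, Matrix.smul_apply, Matrix.sub_apply, Matrix.transpose_apply,
    Matrix.of_apply, smul_eq_mul, pairPartner, Fin.ext_iff]
  split_ifs <;> first
    | (exfalso; omega)
    | (rw [show (j : ℕ) / 2 = (i : ℕ) / 2 by omega]; ring)
    | ring

lemma sum_canonicalL_skew_apply_sq (hq : 2 * q ≤ N) (i : Fin N) :
    ∑ j, ((1 / 2 : ℝ) • (canonicalL N q m r a0 - (canonicalL N q m r a0)ᵀ)) i j ^ 2 =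
      if i.val < 2 * q then (a0 (i / 2) / (r ^ 2 + a0 (i / 2) ^ 2)) ^ 2 else 0 := by
  simp_rw [canonicalL_skew_apply_sq]
  split_ifs with hi
  · simp only [hi, and_true]
    rw [Fin.sum_univ_eq_sum_range (fun j => if j = pairPartner i then
        (a0 (i / 2) / (r ^ 2 + a0 (i / 2) ^ 2)) ^ 2 else 0) N, sum_ite_eq',
      if_pos (mem_range.2 (by unfold pairPartner; split_ifs <;> omega))]
  · simp [hi]

theorem trace_canonicalL_skew_mul_transpose (hq : 2 * q ≤ N) :
    let A := (1 / 2 : ℝ) • (canonicalL N q m r a0 - (canonicalL N q m r a0)ᵀ)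
    (A * Aᵀ).trace = 2 * ∑ ν ∈ range q, (a0 ν / (r ^ 2 + a0 ν ^ 2)) ^ 2 := by
  intro A
  rw [Matrix.trace_mul_transpose_self]
  simp_rw [A, sum_canonicalL_skew_apply_sq r a0 hq]
  rw [Fin.sum_univ_eq_sum_range (fun i => if i < 2 * q then
      (a0 (i / 2) / (r ^ 2 + a0 (i / 2) ^ 2)) ^ 2 else 0) N, sum_range_ite_lt hq,
    sum_range_two_mul_div_two q fun ν => (a0 ν / (r ^ 2 + a0 ν ^ 2)) ^ 2, two_nsmul, two_mul]

end CanonicalL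

section Shear

variable {N m θ r : ℝ}

lemma eq_one_div_iff_of_mul_eq_div (hN : N ≠ 0) (hθ : θ ≠ 0) (h : N * θ = m / r) :
    θ = 1 / r ↔ m = N := by
  constructor
  · rintro rfl
    have hr : r ≠ 0 := by simpa using hθ
    field_simp at h
    exact h.symm
  · rintro rfl
    apply mul_left_cancel₀ hN
    rw [h]
    ring

lemma shear_eq_zero_iff (hm : 0 ≤ m) (hmN : m ≤ N) (hθ : θ ≠ 0) (h : N * θ = m / r) :
    m * (1 / r - θ) ^ 2 + (N - m) * θ ^ 2 = 0 ↔ m = N := by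
  constructor
  · intro hσ
    have hsq : 0 < θ ^ 2 := by positivity
    nlinarith [mul_nonneg hm (sq_nonneg (1 / r - θ))]
  · rintro rfl
    linear_combination (θ - 1 / r) * h

end Shear

theorem stmt_9_general (n q m : ℕ) (r : ℝ) (a0 : ℕ → ℝ)
    (hq : 2 * q ≤ m) (hm : m ≤ n - 2)
    (L S A : Matrix (Fin (n - 2)) (Fin (n - 2)) ℝ) (θ σsq : ℝ)
    (hL : L = canonicalL (n - 2) q m r a0)
    (hS : S = (1 / 2 : ℝ) • (L + Lᵀ))
    (hA : A = (1 / 2 : ℝ) • (L - Lᵀ))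
    (hθ : θ = S.trace / ((n : ℝ) - 2))
    (hσ : σsq = 2 * ∑ ν ∈ Finset.range q, (r / (r ^ 2 + (a0 ν) ^ 2) - θ) ^ 2
        + ((m : ℝ) - 2 * q) * (1 / r - θ) ^ 2 + ((n : ℝ) - 2 - m) * θ ^ 2) :
    ((n : ℝ) - 2) * θ
        = 2 * ∑ ν ∈ Finset.range q, r / (r ^ 2 + (a0 ν) ^ 2) + ((m : ℝ) - 2 * q) / r
    ∧ (A * Aᵀ).trace = 2 * ∑ ν ∈ Finset.range q, (a0 ν / (r ^ 2 + (a0 ν) ^ 2)) ^ 2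
    ∧ (q = 0 → θ ≠ 0 → ((σsq = 0 ↔ m = n - 2) ∧ (σsq = 0 ↔ θ = 1 / r))) := by
  subst hL hA
  have htrace :
      S.trace = 2 * ∑ ν ∈ range q, r / (r ^ 2 + a0 ν ^ 2) + ((m : ℝ) - 2 * q) / r := by
    rw [hS, Matrix.trace_smul, Matrix.trace_add, Matrix.trace_transpose, ← two_mul,
      trace_canonicalL r a0 hq hm, smul_eq_mul, ← mul_assoc]
    norm_num
  -- for `n = 2` the division by `n - 2` is junk, but then the matrices are `0 × 0`
  have hexpansion : ((n : ℝ) - 2) * θ = S.trace := by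
    rw [hθ]
    refine mul_div_cancel_of_imp' fun hn => ?_
    by_contra htr
    have hN₀ := Matrix.ne_zero_of_trace_ne_zero htr
    have hn₂ : n = 2 := by exact_mod_cast sub_eq_zero.1 hn
    omega
  refine ⟨hexpansion.trans htrace, trace_canonicalL_skew_mul_transpose r a0 (hq.trans hm), ?_⟩
  rintro rfl hθ0
  have hn : 2 < n := by
    have hN₀ := Matrix.ne_zero_of_trace_ne_zero (M := S) fun h => hθ0 (by rw [hθ, h, zero_div])
    omega
  have hcast : ((n - 2 : ℕ) : ℝ) = n - 2 := by push_cast [Nat.cast_sub hn.le]; ring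
  have hmN : (m : ℝ) ≤ n - 2 := hcast ▸ Nat.cast_le.2 hm
  have hm_iff : m = n - 2 ↔ (m : ℝ) = n - 2 := by rw [← hcast, Nat.cast_inj]
  have hexp₀ : ((n : ℝ) - 2) * θ = m / r := by simp [hexpansion, htrace]
  have hN : (n : ℝ) - 2 ≠ 0 := by linarith [show (2 : ℝ) < n by exact_mod_cast hn]
  simp only [range_zero, sum_empty, mul_zero, Nat.cast_zero, sub_zero, zero_add] at hσ
  rw [hσ, hm_iff, shear_eq_zero_iff (Nat.cast_nonneg m) hmN hθ0 hexp₀,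
    eq_one_div_iff_of_mul_eq_div hN hθ0 hexp₀]
  exact ⟨.rfl, .rfl⟩

/-- Optical scalars of the canonical optical matrix: the expansion is
`(n-2)θ = 2Σ_ν r/(r²+(a⁰_ν)²) + (m-2q)/r`, the twist satisfies
`ω² = 2Σ_ν (a⁰_ν/(r²+(a⁰_ν)²))²`, and for `q = 0` with `θ ≠ 0` the shear
vanishes iff `m = n-2` iff `θ = 1/r`. -/
theorem stmt_9 (n q m : ℕ) (r : ℝ) (a0 : ℕ → ℝ) (hr : 0 < r)
    (hn : 2 ≤ n) (hq : 2 * q ≤ m) (hm : m ≤ n - 2)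
    (L S A : Matrix (Fin (n - 2)) (Fin (n - 2)) ℝ) (θ σsq : ℝ)
    (hL : L = canonicalL (n - 2) q m r a0)
    (hS : S = (1 / 2 : ℝ) • (L + Lᵀ))
    (hA : A = (1 / 2 : ℝ) • (L - Lᵀ))
    (hθ : θ = S.trace / ((n : ℝ) - 2))
    (hσ : σsq = 2 * ∑ ν ∈ Finset.range q, (r / (r ^ 2 + (a0 ν) ^ 2) - θ) ^ 2
        + ((m : ℝ) - 2 * q) * (1 / r - θ) ^ 2 + ((n : ℝ) - 2 - m) * θ ^ 2) :
    ((n : ℝ) - 2) * θ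
        = 2 * ∑ ν ∈ Finset.range q, r / (r ^ 2 + (a0 ν) ^ 2) + ((m : ℝ) - 2 * q) / r
    ∧ (A * Aᵀ).trace = 2 * ∑ ν ∈ Finset.range q, (a0 ν / (r ^ 2 + (a0 ν) ^ 2)) ^ 2
    ∧ (q = 0 → θ ≠ 0 → ((σsq = 0 ↔ m = n - 2) ∧ (σsq = 0 ↔ θ = 1 / r))) :=
  stmt_9_general n q m r a0 hq hm L S A θ σsq hL hS hA hθ hσ
end

section
/- With the canonical optical matrix having q ≠ 0 twisting blocks and r ≠ 0, the shear σ vanishes if and only if m = 2q = n-2 and all spin functions squared are equal: (a⁰_{(2)})² = (a⁰_{(4)})² = … = (a⁰_{(2q)})². In particular, a shearfree twisting expanding optical matrix of this form exists only in even spacetime dimensions. -/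
/-!
The shear `σ²` is a sum of squares with nonnegative weights `2`, `m - 2q` and `n - 2 - m`, so it
vanishes iff every weighted term does. For `r ≠ 0` and `a ≠ 0` the twisting eigenvalue
`s = r / (r² + a²)` is neither `0` nor `1 / r = r / (r² + 0²)`, and for fixed `r` it determines
`a²`. Hence `σ² = 0` forces both weights `m - 2q` and `n - 2 - m` to vanish and all `s_ν` to equal
`θ`, i.e. all `a⁰_ν²` to agree; conversely, in that situation `θ` is the common value of the `s_ν`.
-/

open Finset

theorem two_mul_sum_sq_add_mul_sq_add_mul_sq_eq_zero_iff {ι R : Type*}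
    [Field R] [LinearOrder R] [IsStrictOrderedRing R] {s : Finset ι} {f : ι → R} {A B x y : R}
    (hA : 0 ≤ A) (hB : 0 ≤ B) :
    2 * ∑ i ∈ s, f i ^ 2 + A * x ^ 2 + B * y ^ 2 = 0 ↔
      (∀ i ∈ s, f i = 0) ∧ (A = 0 ∨ x = 0) ∧ (B = 0 ∨ y = 0) := by
  have hf : 0 ≤ 2 * ∑ i ∈ s, f i ^ 2 := by positivity
  have hAx : 0 ≤ A * x ^ 2 := by positivity
  have hBy : 0 ≤ B * y ^ 2 := by positivity
  rw [add_eq_zero_iff_of_nonneg (by positivity) hBy, add_eq_zero_iff_of_nonneg hf hAx,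
    mul_eq_zero, mul_eq_zero, mul_eq_zero, sum_eq_zero_iff_of_nonneg fun i _ => sq_nonneg (f i)]
  simp only [two_ne_zero, false_or, sq_eq_zero_iff, and_assoc]

theorem eq_of_card_mul_eq_sum {ι K : Type*} [Field K] [CharZero K] {s : Finset ι} {f : ι → K}
    {c θ : K} (hs : s.Nonempty) (hf : ∀ i ∈ s, f i = c) (h : #s * θ = ∑ i ∈ s, f i) : θ = c := by
  rw [sum_congr rfl hf, sum_const, nsmul_eq_mul] at h
  exact mul_left_cancel₀ (Nat.cast_ne_zero.2 hs.card_pos.ne') h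

section TwistingEigenvalue

variable {K : Type*} [Field K] [LinearOrder K] [IsStrictOrderedRing K] {r a b : K}

theorem div_sq_add_sq_ne_zero (hr : r ≠ 0) : r / (r ^ 2 + a ^ 2) ≠ 0 :=
  div_ne_zero hr (by positivity)

theorem div_sq_add_sq_inj (hr : r ≠ 0) :
    r / (r ^ 2 + a ^ 2) = r / (r ^ 2 + b ^ 2) ↔ a ^ 2 = b ^ 2 := by
  rw [div_eq_mul_inv, div_eq_mul_inv, mul_right_inj' hr, inv_inj, add_right_inj]

theorem div_sq_add_sq_ne_one_div (hr : r ≠ 0) (ha : a ≠ 0) : r / (r ^ 2 + a ^ 2) ≠ 1 / r := by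
  have : 1 / r = r / (r ^ 2 + 0 ^ 2) := by field_simp; ring
  rw [this, Ne, div_sq_add_sq_inj hr]
  simpa using ha

end TwistingEigenvalue

/-- For the canonical optical matrix with `q ≠ 0` twisting blocks (all
`a⁰_ν ≠ 0`) and `r ≠ 0`, the shear vanishes iff `m = 2q = n-2` and all spin
functions squared are equal; in particular this requires `n` even. -/
theorem stmt_10 (n q m : ℕ) (r : ℝ) (a0 : ℕ → ℝ) (hr : r ≠ 0)
    (hq0 : q ≠ 0) (ha : ∀ ν < q, a0 ν ≠ 0)
    (hn : 2 ≤ n) (hq : 2 * q ≤ m) (hm : m ≤ n - 2)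
    (θ σsq : ℝ)
    (hθ : ((n : ℝ) - 2) * θ
        = 2 * ∑ ν ∈ Finset.range q, r / (r ^ 2 + (a0 ν) ^ 2) + ((m : ℝ) - 2 * q) / r)
    (hσ : σsq = 2 * ∑ ν ∈ Finset.range q, (r / (r ^ 2 + (a0 ν) ^ 2) - θ) ^ 2
        + ((m : ℝ) - 2 * q) * (1 / r - θ) ^ 2 + ((n : ℝ) - 2 - m) * θ ^ 2) :
    (σsq = 0 ↔ (m = 2 * q ∧ 2 * q = n - 2 ∧
        ∀ ν₁ < q, ∀ ν₂ < q, (a0 ν₁) ^ 2 = (a0 ν₂) ^ 2))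
    ∧ (σsq = 0 → Even n) := by
  have hq_pos : 0 < q := Nat.pos_of_ne_zero hq0
  have hA : (0 : ℝ) ≤ m - 2 * q := sub_nonneg.2 (by exact_mod_cast hq)
  have hB : (0 : ℝ) ≤ n - 2 - m :=
    sub_nonneg.2 (le_sub_iff_add_le.2 (by exact_mod_cast (by omega : m + 2 ≤ n)))
  have key : σsq = 0 ↔ m = 2 * q ∧ 2 * q = n - 2 ∧ ∀ ν₁ < q, ∀ ν₂ < q, a0 ν₁ ^ 2 = a0 ν₂ ^ 2 := by
    rw [hσ, two_mul_sum_sq_add_mul_sq_add_mul_sq_eq_zero_iff hA hB]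
    simp only [mem_range, sub_eq_zero]
    constructor
    · rintro ⟨hs, hm2q, hmn⟩
      have hθs : r / (r ^ 2 + a0 0 ^ 2) = θ := hs 0 hq_pos
      replace hm2q : (m : ℝ) = 2 * q := hm2q.resolve_right fun h =>
        div_sq_add_sq_ne_one_div hr (ha 0 hq_pos) (hθs.trans h.symm)
      replace hmn : (n : ℝ) - 2 = m := hmn.resolve_right fun h =>
        div_sq_add_sq_ne_zero hr (hθs.trans h)
      have hm2q : m = 2 * q := by exact_mod_cast hm2q
      have hmn : n = m + 2 := by exact_mod_cast (by linarith : (n : ℝ) = m + 2)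
      exact ⟨hm2q, by omega, fun ν₁ h₁ ν₂ h₂ =>
        (div_sq_add_sq_inj hr).1 ((hs ν₁ h₁).trans (hs ν₂ h₂).symm)⟩
    · rintro ⟨rfl, hn2q, hsq⟩
      have hs : ∀ ν ∈ range q, r / (r ^ 2 + a0 ν ^ 2) = r / (r ^ 2 + a0 0 ^ 2) := fun ν h =>
        (div_sq_add_sq_inj hr).2 (hsq ν (mem_range.1 h) 0 hq_pos)
      have hn : (n : ℝ) = 2 * q + 2 := by exact_mod_cast (by omega : n = 2 * q + 2)
      have hθs : θ = r / (r ^ 2 + a0 0 ^ 2) := by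
        refine eq_of_card_mul_eq_sum (nonempty_range_iff.2 hq0) hs ?_
        rw [card_range]
        push_cast at hθ
        rw [hn, sub_self, zero_div] at hθ
        linarith
      exact ⟨fun ν h => (hs ν (mem_range.2 h)).trans hθs.symm, Or.inl (by push_cast; ring),
        Or.inl (by push_cast; linarith)⟩
  refine ⟨key, fun h => ⟨q + 1, ?_⟩⟩
  obtain ⟨-, hn2q, -⟩ := key.1 h
  omega
end
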